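/- The permutation π = 3425617 ∈ S_7 is not an allowed pattern of the reverse binary shift, i.e. 3425617 ∉ A_7(Σ_{−−}). -/

import Mathlib

/-- Infinite words over the alphabet `{0,…,k-1}`; `s i` is the letter `s_{i+1}`. -/
abbrev Word (k : ℕ) := ℕ → Fin k

/-- The number of indices `i < j` (0-indexed) with `σ_{s_i} = −` (`false` encodes `−`). -/
def negCount {k : ℕ} (σ : Fin k → Bool) (s : Word k) (j : ℕ) : ℕ :=
  ((Finset.range j).filter (fun i => σ (s i) = false)).card

/-- The strict order `s ≺_σ t` on infinite words. -/
def sLt {k : ℕ} (σ : Fin k → Bool) (s t : Word k) : Prop :=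
  ∃ j : ℕ, (∀ i < j, s i = t i) ∧ s j ≠ t j ∧
    ((Even (negCount σ s j) ∧ s j < t j) ∨ (¬ Even (negCount σ s j) ∧ t j < s j))

/-- `shiftW s i` is the word `s_{[i+1,∞)}`, i.e. the `i`-th iterate of the shift. -/
def shiftW {k : ℕ} (s : Word k) (i : ℕ) : Word k := fun m => s (m + i)

/-- `Pat(s, Σ_σ, n) = π`: the first `n` shifts of `s` are ordered according to `π`
(0-indexed one-line notation). -/
def PatIs {k n : ℕ} (σ : Fin k → Bool) (s : Word k) (π : Equiv.Perm (Fin n)) : Prop :=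
  ∀ i j : Fin n, π i < π j ↔ sLt σ (shiftW s i) (shiftW s j)

/-- The allowed patterns of length `n` of the signed shift `Σ_σ`. -/
def Allowed {k : ℕ} (σ : Fin k → Bool) (n : ℕ) : Set (Equiv.Perm (Fin n)) :=
  {π | ∃ s : Word k, PatIs σ s π}

/-- The starred cycle `ĥπ*` of `π`, as a partial map on 0-indexed positions:
position `π_i` carries value `π_{i+1}`, and position `π_n` carries `*` (i.e. `none`). -/
def hatStar {n : ℕ} (π : Equiv.Perm (Fin n)) (p : Fin n) : Option (Fin n) :=
  if h : (π.symm p : ℕ) = n - 1 then none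
  else some (π ⟨(π.symm p : ℕ) + 1, by have := (π.symm p).isLt; omega⟩)

/-- `e : ℕ → ℕ` (used on `{0,…,k}`) is a `*`-`σ`-segmentation of `ĥπ*`. -/
def IsStarSeg {k n : ℕ} (σ : Fin k → Bool) (π : Equiv.Perm (Fin n)) (e : ℕ → ℕ) : Prop :=
  e 0 = 0 ∧ e k = n ∧ Monotone e ∧
  -- (a) the non-`*` entries in the `t`-th block are increasing (σ_t = +) or decreasing (σ_t = −)
  (∀ t : Fin k, ∀ p q : Fin n, e t ≤ (p : ℕ) → (q : ℕ) < e ((t : ℕ) + 1) → (p : ℕ) < (q : ℕ) →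
    ∀ v w : Fin n, hatStar π p = some v → hatStar π q = some w →
      (if σ t = true then v < w else w < v)) ∧
  -- (b)
  (∀ (hk : 0 < k) (h0 : 0 < n) (h1 : 1 < n), σ ⟨0, hk⟩ = true →
     hatStar π ⟨0, h0⟩ = none → hatStar π ⟨1, h1⟩ = some ⟨0, h0⟩ → e 1 ≤ 1) ∧
  -- (c)
  (∀ (hk : k - 1 < k) (h0 : n - 2 < n) (h1 : n - 1 < n), σ ⟨k - 1, hk⟩ = true →
     hatStar π ⟨n - 2, h0⟩ = some ⟨n - 1, h1⟩ → hatStar π ⟨n - 1, h1⟩ = none →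
     n - 1 ≤ e (k - 1)) ∧
  -- (d)
  (∀ (hk0 : 0 < k) (hk1 : k - 1 < k) (h0 : 0 < n) (h1 : n - 2 < n) (h2 : n - 1 < n),
     σ ⟨0, hk0⟩ = false → σ ⟨k - 1, hk1⟩ = false →
     hatStar π ⟨0, h0⟩ = some ⟨n - 1, h2⟩ →
     hatStar π ⟨n - 2, h1⟩ = some ⟨0, h0⟩ → hatStar π ⟨n - 1, h2⟩ = none →
     e 1 = 0 ∨ n - 1 ≤ e (k - 1)) ∧
  -- (e)
  (∀ (hk0 : 0 < k) (hk1 : k - 1 < k) (h0 : 0 < n) (h1 : 1 < n) (h2 : n - 1 < n),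
     σ ⟨0, hk0⟩ = false → σ ⟨k - 1, hk1⟩ = false →
     hatStar π ⟨n - 1, h2⟩ = some ⟨0, h0⟩ →
     hatStar π ⟨0, h0⟩ = none → hatStar π ⟨1, h1⟩ = some ⟨n - 1, h2⟩ →
     e (k - 1) = n ∨ e 1 ≤ 1)

/-- `ĥπ* ∈ C^{σ,*}`: some `*`-`σ`-segmentation exists. -/
def InCstar {k n : ℕ} (σ : Fin k → Bool) (π : Equiv.Perm (Fin n)) : Prop :=
  ∃ e : ℕ → ℕ, IsStarSeg σ π e

/-- The bad configuration forbidden by condition `(†)`: an integer `b ≥ 1` with `n − 2b ≥ 1`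
such that `π_n` lies strictly between `π_{n−2b}` and `π_{n−b}`, and for all `1 ≤ i ≤ b` and
`0 ≤ t ≤ k−1`, `e_t < π_{n−b−i} ≤ e_{t+1}` iff `e_t < π_{n−i} ≤ e_{t+1}`.
(Values of `π` are 0-indexed, so `e_t < v ≤ e_{t+1}` becomes `e t ≤ v ∧ v < e (t+1)`.) -/
def DaggerBad (k : ℕ) {n : ℕ} (π : Equiv.Perm (Fin n)) (e : ℕ → ℕ) (b : ℕ) : Prop :=
  ∃ (_ : 1 ≤ b) (hbn : 2 * b < n),
    (((π ⟨n - 1 - 2 * b, by omega⟩ : ℕ) < (π ⟨n - 1, by omega⟩ : ℕ) ∧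
      (π ⟨n - 1, by omega⟩ : ℕ) < (π ⟨n - 1 - b, by omega⟩ : ℕ)) ∨
     ((π ⟨n - 1 - b, by omega⟩ : ℕ) < (π ⟨n - 1, by omega⟩ : ℕ) ∧
      (π ⟨n - 1, by omega⟩ : ℕ) < (π ⟨n - 1 - 2 * b, by omega⟩ : ℕ))) ∧
    (∀ i, 1 ≤ i → i ≤ b → ∀ t, t < k →
      ((e t ≤ (π ⟨n - 1 - b - i, by omega⟩ : ℕ) ∧ (π ⟨n - 1 - b - i, by omega⟩ : ℕ) < e (t + 1)) ↔
       (e t ≤ (π ⟨n - 1 - i, by omega⟩ : ℕ) ∧ (π ⟨n - 1 - i, by omega⟩ : ℕ) < e (t + 1))))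

/-- Condition `(†)`. -/
def Dagger {k n : ℕ} (σ : Fin k → Bool) (π : Equiv.Perm (Fin n)) : Prop :=
  ∃ e : ℕ → ℕ, IsStarSeg σ π e ∧ ∀ b : ℕ, ¬ DaggerBad k π e b

/-- The letter of the `π`-monotone word assigned to the (0-indexed) value `v`:
the unique `t` with `e t ≤ v < e (t+1)` when `e` is a segmentation. -/
noncomputable def segLetter {k : ℕ} (hk : 0 < k) (e : ℕ → ℕ) (v : ℕ) : Fin k :=
  ⟨min (k - 1) (sInf {t : ℕ | v < e (t + 1)}),
   by have := Nat.min_le_left (k - 1) (sInf {t : ℕ | v < e (t + 1)}); omega⟩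

/-- The `π`-monotone word `s_1 ⋯ s_n` associated to a segmentation `e`. -/
noncomputable def monoWord {k n : ℕ} (hk : 0 < k) (e : ℕ → ℕ) (π : Equiv.Perm (Fin n)) : List (Fin k) :=
  (List.finRange n).map (fun i => segLetter hk e (π i))

/-- Prepend a finite word to an infinite word. -/
def appendW {k : ℕ} (l : List (Fin k)) (s : Word k) : Word k :=
  fun i => if h : i < l.length then l.get ⟨i, h⟩ else s (i - l.length)

/-- `n(q)`: number of negative letters of a finite word `q`. -/
def negCountL {k : ℕ} (σ : Fin k → Bool) (q : List (Fin k)) : ℕ :=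
  (q.filter (fun c => σ c = false)).length

/-- The least word `w_σ` of `(W_k, ≺_σ)`. -/
def wMin {k : ℕ} (hk : 0 < k) (σ : Fin k → Bool) : Word k :=
  if σ ⟨0, hk⟩ = true then fun _ => ⟨0, hk⟩
  else if σ ⟨k - 1, by omega⟩ = true then
    fun i => if i = 0 then ⟨0, hk⟩ else ⟨k - 1, by omega⟩
  else fun i => if i % 2 = 0 then ⟨0, hk⟩ else ⟨k - 1, by omega⟩

/-- The greatest word `W_σ` of `(W_k, ≺_σ)`. -/
def wMax {k : ℕ} (hk : 0 < k) (σ : Fin k → Bool) : Word k :=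
  if σ ⟨k - 1, by omega⟩ = true then fun _ => ⟨k - 1, by omega⟩
  else if σ ⟨0, hk⟩ = true then
    fun i => if i = 0 then ⟨k - 1, by omega⟩ else ⟨0, hk⟩
  else fun i => if i % 2 = 0 then ⟨k - 1, by omega⟩ else ⟨0, hk⟩

/-- A finite word is primitive if it is not a proper power of a shorter word. -/
def PrimitiveW {k : ℕ} (q : List (Fin k)) : Prop :=
  ¬ ∃ (r : List (Fin k)) (m : ℕ), r.length < q.length ∧ 1 < m ∧
      q = (List.replicate m r).flatten

/-- The word `s^{(1)}` (with `useMin = true`) resp. `s^{(2)}` (with `useMin = false`)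
built from the `π`-monotone word of a segmentation `e` and a 0-indexed position `x0`:
`u p^{n−1}` followed by `w_σ`/`W_σ` according to the parities of `n` and `n(p)`. -/
noncomputable def buildWord {k n : ℕ} (hk : 0 < k) (σ : Fin k → Bool) (e : ℕ → ℕ)
    (π : Equiv.Perm (Fin n)) (x0 : ℕ) (useMin : Bool) : Word k :=
  let w := monoWord hk e π
  let p := (w.take (n - 1)).drop x0
  let tail :=
    if n % 2 = 0 ∨ negCountL σ p % 2 = 0 then
      (if useMin then wMin hk σ else wMax hk σ)
    else
      (if useMin then wMax hk σ else wMin hk σ)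
  appendW (w.take x0 ++ (List.replicate (n - 1) p).flatten) tail

/-- `ψ_k(t)`: the number of primitive words of length `t` over a `k`-letter alphabet. -/
noncomputable def psiW (k t : ℕ) : ℕ :=
  Set.ncard {q : List (Fin k) | q.length = t ∧ PrimitiveW q}

/-- `a(n,k) = Σ_{t=1}^{n−1} ψ_k(t)·k^{n−t−1}`. -/
noncomputable def aNum (n k : ℕ) : ℕ :=
  ∑ t ∈ Finset.Icc 1 (n - 1), psiW k t * k ^ (n - t - 1)

/-- `I_{n,k} = a(n,k) + (k−2)k^{n−2}`, the number of allowed intervals of the `k`-shift. -/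
noncomputable def INum (n k : ℕ) : ℕ := aNum n k + (k - 2) * k ^ (n - 2)

/-- The all-`+` signature, giving the `k`-shift. -/
def allPlus (k : ℕ) : Fin k → Bool := fun _ => true

/-- `b(n,2) = |A_n(Σ_2)|` and `b(n,i) = |A_n(Σ_i) \ A_n(Σ_{i−1})|` for `i ≥ 3`. -/
noncomputable def bNum (n i : ℕ) : ℕ :=
  if i ≤ 2 then (Allowed (allPlus 2) n).ncard
  else ((Allowed (allPlus i) n) \ (Allowed (allPlus (i - 1)) n)).ncard

/-! In the reverse binary shift a smaller first letter decides the order, while a common first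
letter reverses the order of the tails. Reading off the relations of `3425617` forces
`s₁ = 0`, `s₄ = s₅ = 1`, `s₆ = 0`, `s₇ = 1`, `s₈ = 0`, `s₉ = 1` and `Σ⁹ s ≺ Σ⁷ s`. Applying the two
rules to `Σ^{m+2} s ≺ Σ^m s` again and again shows that `Σ⁷ s = 0101⋯`, so `Σ⁹ s = Σ⁷ s`,
a contradiction. -/

namespace SignedShift

variable {k : ℕ} {σ : Fin k → Bool}

lemma shiftW_shiftW (s : Word k) (i j : ℕ) : shiftW (shiftW s i) j = shiftW s (i + j) :=
  funext fun _ => congrArg s (by omega)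

lemma shiftW_apply_zero (s : Word k) (i : ℕ) : shiftW s i 0 = s i :=
  congrArg s (Nat.zero_add i)

lemma negCount_congr {s t : Word k} {j : ℕ} (h : ∀ i < j, s i = t i) :
    negCount σ s j = negCount σ t j := by
  unfold negCount
  rw [Finset.filter_congr fun i hi => by rw [h i (Finset.mem_range.mp hi)]]

lemma negCount_succ (s : Word k) (j : ℕ) :
    negCount σ s (j + 1) = negCount σ (shiftW s 1) j + if σ (s 0) = false then 1 else 0 := by
  simp only [negCount, Finset.card_filter, Finset.sum_range_succ']
  rfl

lemma sLt_irrefl (s : Word k) : ¬ sLt σ s s :=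
  fun ⟨_, _, hne, _⟩ => hne rfl

lemma sLt_of_head_lt {s t : Word k} (h : s 0 < t 0) : sLt σ s t :=
  ⟨0, fun _ hi => absurd hi (Nat.not_lt_zero _), h.ne, Or.inl ⟨by simp [negCount], h⟩⟩

lemma sLt_asymm {s t : Word k} (hst : sLt σ s t) : ¬ sLt σ t s := by
  rintro ⟨j', hpre', hne', hcmp'⟩
  obtain ⟨j, hpre, hne, hcmp⟩ := hst
  obtain rfl : j = j' := by
    rcases lt_trichotomy j j' with h | h | h
    · exact absurd (hpre' j h).symm hne
    · exact h
    · exact absurd (hpre j' h).symm hne'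
  rw [negCount_congr fun i hi => (hpre i hi).symm] at hcmp'
  rcases hcmp with ⟨he, h⟩ | ⟨he, h⟩ <;> rcases hcmp' with ⟨he', h'⟩ | ⟨he', h'⟩
  exacts [lt_asymm h h', he' he, he he', lt_asymm h h']

lemma head_le_of_sLt {s t : Word k} (h : sLt σ s t) : s 0 ≤ t 0 :=
  not_lt.mp fun hlt => sLt_asymm h (sLt_of_head_lt hlt)

/-- A negative first letter flips the parity of every later count of negative letters. -/
lemma sLt_tail_of_head_eq {s t : Word k} (h0 : s 0 = t 0) (hneg : σ (s 0) = false)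
    (h : sLt σ s t) : sLt σ (shiftW t 1) (shiftW s 1) := by
  obtain ⟨_ | j, hpre, hne, hcmp⟩ := h
  · exact absurd h0 hne
  have hcount : negCount σ (shiftW t 1) j = negCount σ (shiftW s 1) j :=
    negCount_congr fun i hi => (hpre (i + 1) (by omega)).symm
  refine ⟨j, fun i hi => (hpre (i + 1) (by omega)).symm, fun h => hne h.symm, ?_⟩
  rw [negCount_succ, if_pos hneg, Nat.even_add_one] at hcmp
  rw [hcount]
  rcases hcmp with ⟨he, h⟩ | ⟨he, h⟩
  exacts [Or.inr ⟨he, h⟩, Or.inl ⟨not_not.mp he, h⟩]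

section Shifts

variable {s : Word k} {i j : ℕ}

lemma sLt_shiftW_succ_of_eq (hij : s i = s j) (hneg : σ (s i) = false)
    (h : sLt σ (shiftW s i) (shiftW s j)) : sLt σ (shiftW s (j + 1)) (shiftW s (i + 1)) := by
  rw [← shiftW_shiftW, ← shiftW_shiftW]
  exact sLt_tail_of_head_eq (by rwa [shiftW_apply_zero, shiftW_apply_zero])
    (by rwa [shiftW_apply_zero]) h

lemma lt_of_sLt_shiftW_of_sLt_shiftW_succ (hneg : σ (s i) = false)
    (h : sLt σ (shiftW s i) (shiftW s j))
    (hsucc : sLt σ (shiftW s (i + 1)) (shiftW s (j + 1))) : s i < s j := by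
  refine lt_of_le_of_ne ?_ fun hij => sLt_asymm (sLt_shiftW_succ_of_eq hij hneg h) hsucc
  simpa only [shiftW_apply_zero] using head_le_of_sLt h

end Shifts

section Binary

variable {σ : Fin 2 → Bool} {s : Word 2} {i j : ℕ}

lemma eq_one_of_sLt_shiftW (h : sLt σ (shiftW s i) (shiftW s j)) (hi : s i = 1) : s j = 1 := by
  have := head_le_of_sLt h
  rw [shiftW_apply_zero, shiftW_apply_zero] at this
  omega

lemma eq_zero_of_sLt_shiftW (h : sLt σ (shiftW s i) (shiftW s j)) (hj : s j = 0) : s i = 0 := by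
  have := head_le_of_sLt h
  rw [shiftW_apply_zero, shiftW_apply_zero] at this
  omega

end Binary

lemma reverseBinary_apply (c : Fin 2) : (![false, false] : Fin 2 → Bool) c = false := by
  fin_cases c <;> rfl

lemma not_sLt_shiftW_two {t : Word 2} (h0 : t 0 = 0) (h1 : t 1 = 1) :
    ¬ sLt ![false, false] (shiftW t 2) t := by
  intro h
  have alternate : ∀ m, t (2 * m) = 0 ∧ t (2 * m + 1) = 1 ∧
      sLt ![false, false] (shiftW t (2 * m + 2)) (shiftW t (2 * m)) := by
    intro m
    induction m with
    | zero => exact ⟨h0, h1, by rwa [show shiftW t (2 * 0) = t from funext fun _ => rfl]⟩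
    | succ m ih =>
      obtain ⟨he, ho, hlt⟩ := ih
      have he' := eq_zero_of_sLt_shiftW hlt he
      have hlt' := sLt_shiftW_succ_of_eq (he'.trans he.symm) (reverseBinary_apply _) hlt
      have ho' := eq_one_of_sLt_shiftW hlt' ho
      have hlt'' := sLt_shiftW_succ_of_eq (ho.trans ho'.symm) (reverseBinary_apply _) hlt'
      exact ⟨he', ho', hlt''⟩
  have hperiodic : shiftW t 2 = t := by
    funext n
    obtain ⟨m, rfl | rfl⟩ := Nat.even_or_odd' n
    · exact (alternate (m + 1)).1.trans (alternate m).1.symm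
    · exact (alternate (m + 1)).2.1.trans (alternate m).2.1.symm
  exact sLt_irrefl t (hperiodic ▸ h)

end SignedShift

open SignedShift in
theorem not_allowed_3425617 :
    Equiv.ofBijective (![2, 3, 1, 4, 5, 0, 6] : Fin 7 → Fin 7) (by decide)
      ∉ Allowed (![false, false] : Fin 2 → Bool) 7 := by
  rintro ⟨s, hs⟩
  have lt03 : sLt ![false, false] (shiftW s 0) (shiftW s 3) := (hs 0 3).mp (by decide)
  have lt14 : sLt ![false, false] (shiftW s 1) (shiftW s 4) := (hs 1 4).mp (by decide)
  have lt34 : sLt ![false, false] (shiftW s 3) (shiftW s 4) := (hs 3 4).mp (by decide)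
  have lt50 : sLt ![false, false] (shiftW s 5) (shiftW s 0) := (hs 5 0).mp (by decide)
  have lt46 : sLt ![false, false] (shiftW s 4) (shiftW s 6) := (hs 4 6).mp (by decide)
  have hs03 : s 0 < s 3 := lt_of_sLt_shiftW_of_sLt_shiftW_succ (reverseBinary_apply _) lt03 lt14
  obtain ⟨hs0, hs3⟩ : s 0 = 0 ∧ s 3 = 1 := by
    generalize s 0 = a, s 3 = b at hs03 ⊢; revert a b; decide
  have hs4 := eq_one_of_sLt_shiftW lt34 hs3
  have hs5 := eq_zero_of_sLt_shiftW lt50 hs0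
  have hs6 := eq_one_of_sLt_shiftW lt46 hs4
  have lt75 := sLt_shiftW_succ_of_eq (hs4.trans hs6.symm) (reverseBinary_apply _) lt46
  have hs7 := eq_zero_of_sLt_shiftW lt75 hs5
  have lt68 := sLt_shiftW_succ_of_eq (hs7.trans hs5.symm) (reverseBinary_apply _) lt75
  have hs8 := eq_one_of_sLt_shiftW lt68 hs6
  have lt97 := sLt_shiftW_succ_of_eq (hs6.trans hs8.symm) (reverseBinary_apply _) lt68
  exact not_sLt_shiftW_two (t := shiftW s 7) hs7 hs8 (by rwa [shiftW_shiftW])
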